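/- arXiv:1611.00411 — 7 statements merged into one kernel-verified Lean document; each statement's English description precedes it below -/
import Mathlib

section
/- Let s : V → ℤ be a sandpile on a locally finite connected graph G. If a sequence x = (x_1,...,x_m) of vertices is legal for s and a sequence y = (y_1,...,y_n) is stabilizing for s, then x is a permutation of a subsequence of y. In particular, m ≤ n. -/
/-- Toppling vertex `x`: `x` loses `deg x` particles and each neighbor gains one. -/
def SimpleGraph.topple {V : Type*} [DecidableEq V] (G : SimpleGraph V) [G.LocallyFinite]
    (s : V → ℤ) (x : V) : V → ℤ :=
  fun v => s v + (if v ∈ G.neighborFinset x then 1 else 0) - (if v = x then (G.degree x : ℤ) else 0)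

/-- A sequence of vertices is legal for `s` if each vertex is unstable at the time it is toppled. -/
def SimpleGraph.Legal {V : Type*} [DecidableEq V] (G : SimpleGraph V) [G.LocallyFinite]
    (s : V → ℤ) (l : List V) : Prop :=
  ∀ i : Fin l.length, (G.degree (l.get i) : ℤ) ≤ (l.take i).foldl (G.topple) s (l.get i)

/-- A sequence of vertices is stabilizing for `s` if the resulting configuration is stable. -/
def SimpleGraph.Stabilizing {V : Type*} [DecidableEq V] (G : SimpleGraph V) [G.LocallyFinite]
    (s : V → ℤ) (l : List V) : Prop :=
  ∀ v, l.foldl (G.topple) s v ≤ (G.degree v : ℤ) - 1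

/-!
Toppling a sequence only depends on how often each vertex occurs in it, so a stabilizing
sequence `y` may topple the first vertex `a` of a legal sequence first. Since `a` is unstable
for `s` and only toppling `a` itself can lower its height, `a` occurs in `y`; removing one
occurrence of `a` from `y` and toppling `a` in `s` reduces the claim to the tail of the legal
sequence.
-/

namespace SimpleGraph

variable {V : Type*} [DecidableEq V] (G : SimpleGraph V) [G.LocallyFinite]

theorem foldl_topple_apply (l : List V) (s : V → ℤ) (v : V) :
    l.foldl G.topple s v =
      s v + (l.countP (fun u => v ∈ G.neighborFinset u) : ℤ) - (l.count v : ℤ) * G.degree v := by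
  induction l generalizing s with
  | nil => simp
  | cons a t ih =>
    rw [List.foldl_cons, ih, List.countP_cons, List.count_cons]
    simp only [topple]
    rcases eq_or_ne a v with rfl | hav
    · simp
      ring
    · by_cases h : v ∈ G.neighborFinset a
      · simp [h, hav, hav.symm]
        ring
      · simp [h, hav, hav.symm]

theorem foldl_topple_perm {l l' : List V} (h : l.Perm l') (s : V → ℤ) :
    l.foldl G.topple s = l'.foldl G.topple s := by
  funext v
  rw [foldl_topple_apply, foldl_topple_apply, h.countP_eq, h.count_eq]

variable {G}

theorem Legal.degree_le_head {s : V → ℤ} {a : V} {l : List V} (h : G.Legal s (a :: l)) :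
    (G.degree a : ℤ) ≤ s a :=
  h ⟨0, by simp⟩

theorem Legal.of_cons {s : V → ℤ} {a : V} {l : List V} (h : G.Legal s (a :: l)) :
    G.Legal (G.topple s a) l := fun i => by
  simpa using h ⟨i + 1, by simp⟩

theorem Stabilizing.mem_of_degree_le {s : V → ℤ} {l : List V} (h : G.Stabilizing s l) {v : V}
    (hv : (G.degree v : ℤ) ≤ s v) : v ∈ l := by
  by_contra hvl
  have hstable := h v
  rw [foldl_topple_apply, List.count_eq_zero_of_not_mem hvl] at hstable
  omega

theorem Stabilizing.erase {s : V → ℤ} {l : List V} (h : G.Stabilizing s l) {a : V}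
    (ha : a ∈ l) : G.Stabilizing (G.topple s a) (l.erase a) := fun v => by
  simpa [foldl_topple_perm G (List.perm_cons_erase ha) s] using h v

theorem Legal.subperm_of_stabilizing {s : V → ℤ} {x y : List V} (hx : G.Legal s x)
    (hy : G.Stabilizing s y) : x.Subperm y := by
  induction x generalizing s y with
  | nil => exact List.nil_subperm
  | cons a x ih =>
    have hay : a ∈ y := hy.mem_of_degree_le hx.degree_le_head
    have htail : x.Subperm (y.erase a) := ih hx.of_cons (hy.erase hay)
    exact ((List.subperm_cons a).2 htail).trans (List.perm_cons_erase hay).symm.subperm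

end SimpleGraph

theorem legal_subperm_stabilizing_general {V : Type*} [DecidableEq V] (G : SimpleGraph V)
    [G.LocallyFinite] (s : V → ℤ) (x y : List V)
    (hx : G.Legal s x) (hy : G.Stabilizing s y) :
    x.Subperm y ∧ x.length ≤ y.length :=
  have h := hx.subperm_of_stabilizing hy
  ⟨h, h.length_le⟩

/-- If `x` is legal for the sandpile `s` and `y` is stabilizing for `s`, then `x` is a
permutation of a subsequence of `y`; in particular `x.length ≤ y.length`. -/
theorem legal_subperm_stabilizing {V : Type*} [DecidableEq V] (G : SimpleGraph V)
    [G.LocallyFinite] (hconn : G.Connected) (s : V → ℤ) (x y : List V)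
    (hx : G.Legal s x) (hy : G.Stabilizing s y) :
    x.Subperm y ∧ x.length ≤ y.length :=
  legal_subperm_stabilizing_general G s x y hx hy
end

section
/- Least Action Principle for the divisible sandpile: Let σ : ℤ^d → [0,∞) have finite total mass. If w : ℤ^d → [0,∞) satisfies σ + (1/2d)Δw ≤ 1 pointwise, then w ≥ u_∞ pointwise, where u_∞ is the odometer of any thorough toppling sequence started from σ. Hence u_∞(x) = inf { w(x) : w ≥ 0, σ + (1/2d)Δw ≤ 1 }. -/
/-- The lattice `ℤᵈ`. -/
abbrev Vd (d : ℕ) := Fin d → ℤ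

/-- The neighbor of `x` in direction `j = (i, b)`: `x + eᵢ` if `b`, else `x − eᵢ`. -/
def nbr {d : ℕ} (x : Vd d) (j : Fin d × Bool) : Vd d :=
  if j.2 then x + Pi.single j.1 1 else x - Pi.single j.1 1

/-- The graph Laplacian on `ℤᵈ`: `Δf(x) = Σ_{y ∼ x} (f(y) − f(x))`. -/
def lapd {d : ℕ} (f : Vd d → ℝ) (x : Vd d) : ℝ :=
  ∑ j : Fin d × Bool, (f (nbr x j) - f x)

/-- Toppling a site of the divisible sandpile: the excess mass above 1 at `x` (if any) is
distributed equally among the `2d` neighbors of `x`. -/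
noncomputable def toppleD {d : ℕ} (σ : Vd d → ℝ) (x : Vd d) : Vd d → ℝ := fun v =>
  if v = x then min (σ x) 1
  else if ∃ j : Fin d × Bool, v = nbr x j then σ v + max (σ x - 1) 0 / (2 * d) else σ v

/-- The mass configuration after the first `k` topplings of the sequence `x`. -/
noncomputable def confSeq {d : ℕ} (σ : Vd d → ℝ) (x : ℕ → Vd d) : ℕ → Vd d → ℝ
  | 0 => σ
  | k + 1 => toppleD (confSeq σ x k) (x k)

/-- The odometer after `k` topplings: total mass emitted from each site so far. -/
noncomputable def odomSeq {d : ℕ} (σ : Vd d → ℝ) (x : ℕ → Vd d) : ℕ → Vd d → ℝ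
  | 0 => fun _ => 0
  | k + 1 => fun v =>
      odomSeq σ x k v + if v = x k then max (confSeq σ x k v - 1) 0 else 0

/-- A toppling sequence is thorough if whenever a site attains mass `> 1`, it is chosen
for toppling at some later time. -/
def Thorough {d : ℕ} (σ : Vd d → ℝ) (x : ℕ → Vd d) : Prop :=
  ∀ k v, 1 < confSeq σ x k v → ∃ m, k ≤ m ∧ x m = v

lemma nbr_apply {d : ℕ} (x : Vd d) (i : Fin d) (b : Bool) (t : Fin d) :
    nbr x (i, b) t = x t + (if t = i then (if b then 1 else -1) else 0) := by
  unfold nbr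
  cases b <;> simp [Pi.single_apply] <;> split_ifs <;> ring

lemma nbr_ne {d : ℕ} (x : Vd d) (j : Fin d × Bool) : nbr x j ≠ x := by
  obtain ⟨i, b⟩ := j
  intro h
  have h1 := congrFun h i
  rw [nbr_apply] at h1
  simp at h1
  cases b <;> simp_all <;> omega

lemma nbr_inj {d : ℕ} (x : Vd d) : Function.Injective (nbr x) := by
  rintro ⟨i, b⟩ ⟨i', b'⟩ h
  have h1 := congrFun h i
  rw [nbr_apply, nbr_apply] at h1
  by_cases hii : i = i'
  · subst hii
    simp at h1
    cases b <;> cases b' <;> simp_all <;> omega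
  · exfalso
    simp [hii] at h1
    cases b <;> simp_all <;> omega

lemma nbr_invol {d : ℕ} (x : Vd d) (i : Fin d) (b : Bool) :
    nbr (nbr x (i, b)) (i, !b) = x := by
  funext t
  rw [nbr_apply, nbr_apply]
  cases b <;> simp only [Bool.not_true, Bool.not_false, if_true, if_false,
    Bool.false_eq_true, Bool.true_eq_false] <;> split_ifs <;> ring

lemma nbr_symm_iff {d : ℕ} (v z : Vd d) :
    (∃ j, v = nbr z j) ↔ (∃ j, nbr v j = z) := by
  constructor
  · rintro ⟨⟨i, b⟩, rfl⟩; exact ⟨(i, !b), nbr_invol z i b⟩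
  · rintro ⟨⟨i, b⟩, h⟩; exact ⟨(i, !b), by rw [← h, nbr_invol]⟩

lemma sum_ind {d : ℕ} (v z : Vd d) (e : ℝ) :
    ∑ j : Fin d × Bool, (if nbr v j = z then e else 0) =
      if ∃ j : Fin d × Bool, nbr v j = z then e else 0 := by
  split_ifs with h
  · obtain ⟨j₀, hj₀⟩ := h
    rw [Finset.sum_eq_single j₀]
    · simp [hj₀]
    · intro j _ hj
      rw [if_neg]
      intro hjz
      exact hj (nbr_inj v (hjz.trans hj₀.symm))
    · simp
  · push_neg at h
    simp [h]

lemma lapd_eq {d : ℕ} (f : Vd d → ℝ) (v : Vd d) :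
    lapd f v = (∑ j : Fin d × Bool, f (nbr v j)) - 2 * d * f v := by
  unfold lapd
  rw [Finset.sum_sub_distrib, Finset.sum_const, Finset.card_univ,
    Fintype.card_prod, Fintype.card_fin, Fintype.card_bool, nsmul_eq_mul]
  push_cast
  ring

lemma odom_succ {d : ℕ} (σ : Vd d → ℝ) (x : ℕ → Vd d) (k : ℕ) (v : Vd d) :
    odomSeq σ x (k + 1) v = odomSeq σ x k v +
      (if v = x k then max (confSeq σ x k (x k) - 1) 0 else 0) := by
  show odomSeq σ x k v + _ = _
  congr 1
  split_ifs with h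
  · rw [h]
  · rfl

lemma odom_mono {d : ℕ} (σ : Vd d → ℝ) (x : ℕ → Vd d) (v : Vd d) :
    Monotone (fun k => odomSeq σ x k v) := by
  apply monotone_nat_of_le_succ
  intro k
  rw [odom_succ]
  have : (0:ℝ) ≤ if v = x k then max (confSeq σ x k (x k) - 1) 0 else 0 := by
    split_ifs
    · exact le_max_right _ _
    · exact le_rfl
  linarith

lemma conf_eq {d : ℕ} (hd : 0 < d) (σ : Vd d → ℝ) (x : ℕ → Vd d) :
    ∀ k v, confSeq σ x k v = σ v + (1 / (2 * d)) * lapd (odomSeq σ x k) v := by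
  have hd' : (d:ℝ) ≠ 0 := Nat.cast_ne_zero.2 hd.ne'
  intro k
  induction k with
  | zero => intro v; simp [confSeq, odomSeq, lapd]
  | succ k ih =>
    intro v
    have hmin : ∀ a : ℝ, a - max (a - 1) 0 = min a 1 := by
      intro a
      rcases le_total a 1 with h | h
      · rw [max_eq_right (by linarith), min_eq_left h, sub_zero]
      · rw [max_eq_left (by linarith), min_eq_right h]; ring
    set z := x k with hz
    set e := max (confSeq σ x k z - 1) 0 with he
    have hlap : ∀ v : Vd d, lapd (odomSeq σ x (k + 1)) v =
        lapd (odomSeq σ x k) v + (if ∃ j : Fin d × Bool, nbr v j = z then e else 0)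
          - (if v = z then (2 * d : ℝ) * e else 0) := by
      intro v
      have hterm : ∀ j : Fin d × Bool,
          odomSeq σ x (k + 1) (nbr v j) - odomSeq σ x (k + 1) v =
            (odomSeq σ x k (nbr v j) - odomSeq σ x k v)
              + ((if nbr v j = z then e else 0) - (if v = z then e else 0)) := by
        intro j
        rw [odom_succ, odom_succ, ← hz, ← he]
        ring
      have h2 : ∑ j : Fin d × Bool, ((if nbr v j = z then e else 0)
            - (if v = z then e else 0)) =
          (if ∃ j : Fin d × Bool, nbr v j = z then e else 0)
            - (if v = z then (2 * d : ℝ) * e else 0) := by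
        rw [Finset.sum_sub_distrib, sum_ind, Finset.sum_const, Finset.card_univ,
          Fintype.card_prod, Fintype.card_fin, Fintype.card_bool, nsmul_eq_mul]
        push_cast
        split_ifs <;> ring
      unfold lapd
      rw [Finset.sum_congr rfl fun j _ => hterm j, Finset.sum_add_distrib, h2]
      ring
    show toppleD (confSeq σ x k) z v = _
    unfold toppleD
    by_cases hvz : v = z
    · rw [if_pos hvz, hvz, hlap z, if_pos rfl]
      rw [if_neg (by push_neg; intro j; exact nbr_ne z j)]
      rw [← hmin (confSeq σ x k z), ← he, ih z]
      field_simp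
      ring
    · rw [if_neg hvz, hlap v, if_neg hvz]
      by_cases hnb : ∃ j : Fin d × Bool, v = nbr z j
      · rw [if_pos hnb, if_pos ((nbr_symm_iff v z).mp hnb), ih v]
        field_simp
        ring
      · rw [if_neg hnb, if_neg (fun h => hnb ((nbr_symm_iff v z).mpr h)), ih v]
        ring

lemma odom_le {d : ℕ} (hd : 0 < d) (σ : Vd d → ℝ) (x : ℕ → Vd d)
    (w : Vd d → ℝ) (hw0 : ∀ v, 0 ≤ w v)
    (hw : ∀ v, σ v + (1 / (2 * d)) * lapd w v ≤ 1) :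
    ∀ k v, odomSeq σ x k v ≤ w v := by
  have hd' : (d:ℝ) ≠ 0 := Nat.cast_ne_zero.2 hd.ne'
  have hc : (1 / (2 * (d:ℝ))) * (2 * d) = 1 := by field_simp
  have hcpos : (0:ℝ) < 1 / (2 * (d:ℝ)) := by positivity
  intro k
  induction k with
  | zero => intro v; simpa [odomSeq] using hw0 v
  | succ k ih =>
    intro v
    rw [odom_succ]
    by_cases hvz : v = x k
    · rw [if_pos hvz, ← hvz]
      rcases le_or_gt (confSeq σ x k v - 1) 0 with h | h
      · rw [max_eq_right h]
        simpa using ih v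
      · rw [max_eq_left h.le, conf_eq hd σ x k v]
        set c : ℝ := 1 / (2 * (d:ℝ)) with hcdef
        have hca : ∀ r : ℝ, c * (2 * d * r) = r := by
          intro r
          rw [show c * (2 * (d:ℝ) * r) = (c * (2 * d)) * r by ring, hc, one_mul]
        have hU := lapd_eq (odomSeq σ x k) v
        have hW := lapd_eq w v
        have hsum : (∑ j : Fin d × Bool, odomSeq σ x k (nbr v j)) ≤
            ∑ j : Fin d × Bool, w (nbr v j) :=
          Finset.sum_le_sum fun j _ => ih (nbr v j)
        have hsum' := mul_le_mul_of_nonneg_left hsum hcpos.le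
        have hwv := hw v
        rw [hW] at hwv
        rw [hU]
        have e1 : c * ((∑ j : Fin d × Bool, odomSeq σ x k (nbr v j))
            - 2 * d * odomSeq σ x k v) =
            c * (∑ j : Fin d × Bool, odomSeq σ x k (nbr v j)) - odomSeq σ x k v := by
          rw [mul_sub, hca]
        have e2 : c * ((∑ j : Fin d × Bool, w (nbr v j)) - 2 * d * w v) =
            c * (∑ j : Fin d × Bool, w (nbr v j)) - w v := by
          rw [mul_sub, hca]
        rw [e1]
        rw [e2] at hwv
        linarith
    · rw [if_neg hvz, add_zero]
      exact ih v

lemma final_le_one {d : ℕ} (hd : 0 < d) (σ : Vd d → ℝ) (x : ℕ → Vd d)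
    (hth : Thorough σ x) (uinf : Vd d → ℝ)
    (hu : ∀ v, Filter.Tendsto (fun k => odomSeq σ x k v) Filter.atTop (nhds (uinf v)))
    (v : Vd d) : σ v + (1 / (2 * d)) * lapd uinf v ≤ 1 := by
  by_contra hlt
  push_neg at hlt
  have hle : ∀ k z, odomSeq σ x k z ≤ uinf z := fun k z =>
    (odom_mono σ x z).ge_of_tendsto (hu z) k
  have htend : Filter.Tendsto (fun k => confSeq σ x k v) Filter.atTop
      (nhds (σ v + (1 / (2 * d)) * lapd uinf v)) := by
    have h1 : Filter.Tendsto (fun k => lapd (odomSeq σ x k) v) Filter.atTop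
        (nhds (lapd uinf v)) := by
      unfold lapd
      exact tendsto_finset_sum _ fun j _ => (hu (nbr v j)).sub (hu v)
    exact ((h1.const_mul (1 / (2 * (d:ℝ)))).const_add (σ v)).congr
      fun k => (conf_eq hd σ x k v).symm
  obtain ⟨ε, hεpos, hεlt⟩ : ∃ ε > (0:ℝ),
      1 + ε < σ v + (1 / (2 * (d:ℝ))) * lapd uinf v :=
    ⟨(σ v + (1 / (2 * (d:ℝ))) * lapd uinf v - 1) / 2, by linarith, by linarith⟩
  have hev : ∀ᶠ k in Filter.atTop, 1 + ε < confSeq σ x k v :=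
    htend.eventually (eventually_gt_nhds hεlt)
  obtain ⟨K, hK⟩ := Filter.eventually_atTop.mp hev
  have claim : ∀ n : ℕ, ∃ k, K ≤ k ∧ odomSeq σ x K v + n * ε ≤ odomSeq σ x k v := by
    intro n
    induction n with
    | zero => exact ⟨K, le_rfl, by simp⟩
    | succ n ihn =>
      obtain ⟨k, hKk, hk⟩ := ihn
      obtain ⟨m, hkm, hmv⟩ := hth k v (by linarith [hK k hKk])
      have hKm : K ≤ m := hKk.trans hkm
      have hconfm : 1 + ε < confSeq σ x m v := hK m hKm
      have hstep : odomSeq σ x m v + ε ≤ odomSeq σ x (m + 1) v := by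
        rw [odom_succ, if_pos hmv.symm, hmv]
        have : ε ≤ max (confSeq σ x m v - 1) 0 := le_max_of_le_left (by linarith)
        linarith
      have hmono : odomSeq σ x k v ≤ odomSeq σ x m v := odom_mono σ x v hkm
      exact ⟨m + 1, by omega, by push_cast; linarith⟩
  have : ∀ n : ℕ, (n : ℝ) * ε ≤ uinf v - odomSeq σ x K v := by
    intro n
    obtain ⟨k, _, hk⟩ := claim n
    linarith [hle k v]
  obtain ⟨n, hn⟩ := exists_nat_gt ((uinf v - odomSeq σ x K v) / ε)
  have := this n
  rw [div_lt_iff₀ hεpos] at hn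
  linarith


/-- Least Action Principle for the divisible sandpile: if `w ≥ 0` satisfies
`σ + (1/2d)Δw ≤ 1` pointwise, then `w ≥ u∞` pointwise for the odometer `u∞` of any
thorough toppling sequence; hence `u∞(x)` is the pointwise infimum over all such `w`. -/
theorem divisible_sandpile_least_action {d : ℕ} (hd : 0 < d) (σ : Vd d → ℝ)
    (hpos : ∀ v, 0 ≤ σ v) (hmass : Summable σ) (x : ℕ → Vd d) (hth : Thorough σ x)
    (uinf : Vd d → ℝ)
    (hu : ∀ v, Filter.Tendsto (fun k => odomSeq σ x k v) Filter.atTop (nhds (uinf v)))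
    (w : Vd d → ℝ) (hw0 : ∀ v, 0 ≤ w v) (hw : ∀ v, σ v + (1 / (2 * d)) * lapd w v ≤ 1) :
    (∀ v, uinf v ≤ w v) ∧
    (∀ v, uinf v = sInf {c : ℝ | ∃ w' : Vd d → ℝ, (∀ z, 0 ≤ w' z) ∧
      (∀ z, σ z + (1 / (2 * d)) * lapd w' z ≤ 1) ∧ c = w' v}) := by
  have hle : ∀ k v, odomSeq σ x k v ≤ uinf v := fun k v =>
    (odom_mono σ x v).ge_of_tendsto (hu v) k
  have huinf0 : ∀ v, 0 ≤ uinf v := by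
    intro v
    have := hle 0 v
    simpa [odomSeq] using this
  have hub : ∀ (w' : Vd d → ℝ), (∀ z, 0 ≤ w' z) →
      (∀ z, σ z + (1 / (2 * d)) * lapd w' z ≤ 1) → ∀ v, uinf v ≤ w' v := by
    intro w' h0 h1 v
    exact le_of_tendsto' (hu v) fun k => odom_le hd σ x w' h0 h1 k v
  refine ⟨hub w hw0 hw, fun v => le_antisymm ?_ ?_⟩
  · refine le_csInf ⟨w v, ⟨w, hw0, hw, rfl⟩⟩ ?_
    rintro c ⟨w', h0, h1, rfl⟩
    exact hub w' h0 h1 v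
  · apply csInf_le
    · refine ⟨0, fun c hc => ?_⟩
      obtain ⟨w', hw'0, _, rfl⟩ := hc
      exact hw'0 v
    · exact ⟨uinf, huinf0, final_le_one hd σ x hth uinf hu, rfl⟩
end

section
/- In the divisible sandpile limit, every site z with σ_0(z) < σ_∞(z) < 1 has a neighboring site y with σ_∞(y) = 1. That is, every partially filled site that received mass has a fully filled neighbor. -/
lemma nbr_symm {d : ℕ} (y z : Vd d) (j : Fin d × Bool) (h : z = nbr y j) :
    nbr z (j.1, !j.2) = y := by
  obtain ⟨i, b⟩ := j
  cases b
  · simp only [nbr, Bool.not_false, Bool.false_eq_true, if_false, if_true] at h ⊢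
    rw [h, sub_add_cancel]
  · simp only [nbr, Bool.not_true, Bool.false_eq_true, if_false, if_true] at h ⊢
    rw [h, add_sub_cancel_right]

lemma conf_ge_one_mono {d : ℕ} (σ : Vd d → ℝ) (x : ℕ → Vd d) (k : ℕ) (v : Vd d)
    (h : 1 ≤ confSeq σ x k v) : ∀ m, k ≤ m → 1 ≤ confSeq σ x m v := by
  intro m hm
  induction m with
  | zero => simpa [Nat.le_zero.mp hm] using h
  | succ n ih =>
    rcases Nat.lt_or_ge k (n+1) with h1 | h1
    · have hn : 1 ≤ confSeq σ x n v := ih (Nat.lt_succ_iff.mp h1)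
      show 1 ≤ toppleD (confSeq σ x n) (x n) v
      unfold toppleD
      split_ifs with h2 h3
      · subst h2; exact le_min hn le_rfl
      · have : (0:ℝ) ≤ max (confSeq σ x n (x n) - 1) 0 / (2 * d) :=
          div_nonneg (le_max_right _ _) (by positivity)
        linarith
      · exact hn
    · have : k = n + 1 := le_antisymm hm h1
      subst this; exact h

lemma sinf_le_one {d : ℕ} (σ : Vd d → ℝ) (x : ℕ → Vd d) (hth : Thorough σ x)
    (σinf : Vd d → ℝ)
    (hlim : ∀ v, Filter.Tendsto (fun k => confSeq σ x k v) Filter.atTop (nhds (σinf v)))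
    (v : Vd d) : σinf v ≤ 1 := by
  by_contra h
  push_neg at h
  have hev : ∀ᶠ k in Filter.atTop, 1 < confSeq σ x k v :=
    (hlim v).eventually (eventually_gt_nhds h)
  obtain ⟨k₀, hk₀⟩ := Filter.eventually_atTop.1 hev
  obtain ⟨m, hm, hxm⟩ := hth k₀ v (hk₀ k₀ le_rfl)
  have hle : confSeq σ x (m+1) v ≤ 1 := by
    show toppleD (confSeq σ x m) (x m) v ≤ 1
    unfold toppleD
    rw [if_pos hxm.symm]
    exact min_le_right _ _
  have := hk₀ (m+1) (le_trans hm (Nat.le_succ m))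
  linarith

/-- In the divisible sandpile limit, every site `z` with `σ₀(z) < σ∞(z) < 1` has a
neighboring site `y` with `σ∞(y) = 1`. -/
theorem divisible_sandpile_boundary {d : ℕ} (hd : 0 < d) (σ₀ : Vd d → ℝ)
    (hpos : ∀ v, 0 ≤ σ₀ v) (hmass : Summable σ₀) (x : ℕ → Vd d) (hth : Thorough σ₀ x)
    (σinf : Vd d → ℝ)
    (hlim : ∀ v, Filter.Tendsto (fun k => confSeq σ₀ x k v) Filter.atTop (nhds (σinf v))) :
    ∀ z : Vd d, σ₀ z < σinf z → σinf z < 1 → ∃ j : Fin d × Bool, σinf (nbr z j) = 1 := by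
  intro z hz hz1
  -- there is a step where the mass at z strictly increases
  have hstep : ∃ k, confSeq σ₀ x k z < confSeq σ₀ x (k+1) z := by
    by_contra hno
    push_neg at hno
    have anti : ∀ k, confSeq σ₀ x k z ≤ σ₀ z := by
      intro k
      induction k with
      | zero => exact le_rfl
      | succ n ih => exact le_trans (hno n) ih
    have : σinf z ≤ σ₀ z :=
      le_of_tendsto (hlim z) (Filter.Eventually.of_forall anti)
    linarith
  obtain ⟨k, hk⟩ := hstep
  have hk' : confSeq σ₀ x k z < toppleD (confSeq σ₀ x k) (x k) z := hk
  unfold toppleD at hk'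
  split_ifs at hk' with h1 h2
  · exact absurd (h1 ▸ min_le_left (confSeq σ₀ x k (x k)) 1 : _ ) (not_le.mpr hk')
  · -- z is a neighbor of x k, and x k had mass > 1
    obtain ⟨j, hj⟩ := h2
    have hex : (0:ℝ) < max (confSeq σ₀ x k (x k) - 1) 0 / (2 * d) := by linarith
    have hy1 : 1 < confSeq σ₀ x k (x k) := by
      by_contra hc
      push_neg at hc
      have : max (confSeq σ₀ x k (x k) - 1) 0 = 0 := max_eq_right (by linarith)
      rw [this] at hex
      simp at hex
    refine ⟨(j.1, !j.2), ?_⟩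
    rw [nbr_symm (x k) z j hj]
    have hge : 1 ≤ σinf (x k) := by
      refine ge_of_tendsto (hlim (x k)) (Filter.eventually_atTop.2 ⟨k, ?_⟩)
      exact conf_ge_one_mono σ₀ x k (x k) hy1.le
    exact le_antisymm (sinf_le_one σ₀ x hth σinf hlim (x k)) hge
  · exact absurd hk' (lt_irrefl _)
end

section
/- Let γ : ℤ^d → ℝ satisfy (1/2d)Δγ = σ_0 − 1. Then the divisible sandpile odometer u equals s − γ, where s(x) = inf { f(x) : f : ℤ^d → ℝ, f ≥ γ and Δf ≤ 0 } is the solution of the obstacle problem with obstacle γ. Equivalently, f belongs to the feasible set of the obstacle problem if and only if w = f − γ is a nonnegative function with σ_0 + (1/2d)Δw ≤ 1. -/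
lemma lapd_sub {d : ℕ} (f g : Vd d → ℝ) (x : Vd d) :
    lapd (f - g) x = lapd f x - lapd g x := by
  simp [lapd, Finset.sum_sub_distrib]
  ring

lemma lapd_finsum {d : ℕ} {α : Type*} (s : Finset α) (g : α → Vd d → ℝ) (x : Vd d) :
    lapd (fun z => ∑ a ∈ s, g a z) x = ∑ a ∈ s, lapd (g a) x := by
  simp [lapd, Finset.sum_sub_distrib]
  rw [Finset.sum_comm, ← Finset.sum_sub_distrib]
  simp [Finset.mul_sum]

lemma lapd_const_mul {d : ℕ} (c : ℝ) (f : Vd d → ℝ) (x : Vd d) :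
    lapd (fun z => c * f z) x = c * lapd f x := by
  simp [lapd, Finset.mul_sum, mul_sub]
  ring

lemma nbr_sub {d : ℕ} (x y : Vd d) (j : Fin d × Bool) :
    nbr x j - y = nbr (x - y) j := by
  unfold nbr; rcases j with ⟨i, b⟩; cases b <;> simp <;> abel

/-- ℓ¹ norm on the lattice, as an integer. -/
def nd {d : ℕ} (z : Vd d) : ℤ := ∑ i, |z i|

lemma nd_nonneg {d : ℕ} (z : Vd d) : 0 ≤ nd z :=
  Finset.sum_nonneg fun i _ => abs_nonneg _

lemma nbr_eq_update {d : ℕ} (z : Vd d) (i : Fin d) (b : Bool) :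
    nbr z (i, b) = Function.update z i (z i + if b then 1 else -1) := by
  funext i'
  rcases eq_or_ne i' i with rfl | h
  · cases b <;> simp [nbr] <;> ring
  · cases b <;> simp [nbr, Function.update, h, Pi.single_eq_of_ne h]

lemma nd_nbr {d : ℕ} (z : Vd d) (i : Fin d) (b : Bool) :
    nd (nbr z (i, b)) = nd z - |z i| + |z i + if b then 1 else -1| := by
  rw [nbr_eq_update]
  unfold nd
  rw [← Finset.add_sum_erase _ _ (Finset.mem_univ i),
      ← Finset.add_sum_erase _ (fun i => |z i|) (Finset.mem_univ i)]
  rw [Finset.sum_congr rfl (fun i' hi' => by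
    rw [Function.update_of_ne (Finset.ne_of_mem_erase hi')])]
  simp
  ring

def phi (R t : ℤ) : ℝ := max ((R : ℝ) - (t : ℝ)) 0

lemma phi_nonneg (R t : ℤ) : 0 ≤ phi R t := le_max_right _ _

lemma phi_antitone {R t t' : ℤ} (h : t ≤ t') : phi R t' ≤ phi R t := by
  apply max_le_max _ le_rfl
  have : (t : ℝ) ≤ t' := by exact_mod_cast h
  linarith

lemma phi_key (R n : ℤ) (hn1 : 1 ≤ n) :
    phi R (n + 1) + phi R (n - 1) - 2 * phi R n ≤ if n = R then 1 else 0 := by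
  rcases lt_trichotomy n R with h | rfl | h
  · have h1 : n + 1 ≤ R := h
    have e1 : phi R (n+1) = ((R : ℝ) - n - 1) := by
      unfold phi; rw [max_eq_left] <;> push_cast <;> [ring; skip]
      have : (n : ℝ) + 1 ≤ R := by exact_mod_cast h1
      linarith
    have e2 : phi R (n-1) = ((R : ℝ) - n + 1) := by
      unfold phi; rw [max_eq_left] <;> push_cast <;> [ring; skip]
      have : (n : ℝ) < R := by exact_mod_cast h
      linarith
    have e3 : phi R n = ((R : ℝ) - n) := by
      unfold phi; rw [max_eq_left]
      have : (n : ℝ) < R := by exact_mod_cast h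
      linarith
    rw [e1, e2, e3, if_neg (by omega)]; ring_nf; norm_num
  · have e1 : phi n (n+1) = 0 := by
      unfold phi; rw [max_eq_right]; push_cast; linarith
    have e2 : phi n (n-1) = 1 := by
      unfold phi; rw [max_eq_left] <;> push_cast <;> linarith
    have e3 : phi n n = 0 := by
      unfold phi; rw [max_eq_right]; linarith
    rw [e1, e2, e3, if_pos rfl]; norm_num
  · have e0 : ∀ t : ℤ, R ≤ t → phi R t = 0 := fun t ht => by
      unfold phi; rw [max_eq_right]
      have : (R : ℝ) ≤ t := by exact_mod_cast ht
      linarith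
    rw [e0 _ (by omega), e0 _ (by omega), e0 _ (by omega), if_neg (by omega)]
    norm_num

def cone {d : ℕ} (y : Vd d) (R : ℤ) (x : Vd d) : ℝ := phi R (nd (x - y))

lemma cone_nonneg {d : ℕ} (y : Vd d) (R : ℤ) (x : Vd d) : 0 ≤ cone y R x :=
  phi_nonneg _ _

lemma abs_le_nd {d : ℕ} (z : Vd d) (i : Fin d) : |z i| ≤ nd z :=
  Finset.single_le_sum (f := fun i => |z i|) (fun i _ => abs_nonneg _) (Finset.mem_univ i)

lemma pair_bound (R n a : ℤ) (hna : |a| ≤ n) :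
    (phi R (n - |a| + |a + 1|) - phi R n) + (phi R (n - |a| + |a + -1|) - phi R n)
      ≤ if n = R then 1 else 0 := by
  simp only [Int.abs_eq_natAbs] at hna ⊢
  rcases lt_trichotomy a 0 with hc | hc | hc
  · rw [show n - (a.natAbs : ℤ) + ((a + 1).natAbs : ℤ) = n - 1 by omega,
        show n - (a.natAbs : ℤ) + ((a + -1).natAbs : ℤ) = n + 1 by omega]
    have := phi_key R n (by omega)
    linarith
  · subst hc
    rw [show n - ((0:ℤ).natAbs : ℤ) + (((0:ℤ) + 1).natAbs : ℤ) = n + 1 by norm_num,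
        show n - ((0:ℤ).natAbs : ℤ) + (((0:ℤ) + -1).natAbs : ℤ) = n + 1 by norm_num]
    have h1 : phi R (n + 1) ≤ phi R n := phi_antitone (by omega)
    have h2 : (0:ℝ) ≤ if n = R then (1:ℝ) else 0 := by positivity
    linarith
  · rw [show n - (a.natAbs : ℤ) + ((a + 1).natAbs : ℤ) = n + 1 by omega,
        show n - (a.natAbs : ℤ) + ((a + -1).natAbs : ℤ) = n - 1 by omega]
    have := phi_key R n (by omega)
    linarith

lemma lapd_cone_le {d : ℕ} (y : Vd d) (R : ℤ) (x : Vd d) :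
    lapd (cone y R) x ≤ if nd (x - y) = R then (d : ℝ) else 0 := by
  have hcn : ∀ j, cone y R (nbr x j) = phi R (nd (nbr (x - y) j)) := by
    intro j; unfold cone; rw [nbr_sub]
  unfold lapd
  simp only [hcn]
  rw [Fintype.sum_prod_type]
  have hbound : ∀ i : Fin d,
      (∑ b : Bool, (phi R (nd (nbr (x - y) (i, b))) - phi R (nd (x - y))))
        ≤ if nd (x - y) = R then (1 : ℝ) else 0 := by
    intro i
    rw [Fintype.sum_bool, nd_nbr (x - y) i true, nd_nbr (x - y) i false]
    simp only [if_true, Bool.false_eq_true, if_false]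
    have := pair_bound R (nd (x - y)) ((x - y) i) (abs_le_nd (x - y) i)
    linarith
  calc ∑ i : Fin d, ∑ b : Bool, (phi R (nd (nbr (x - y) (i, b))) - phi R (nd (x - y)))
      ≤ ∑ _i : Fin d, (if nd (x - y) = R then (1:ℝ) else 0) :=
        Finset.sum_le_sum fun i _ => hbound i
    _ = if nd (x - y) = R then (d : ℝ) else 0 := by
        rw [Finset.sum_const, Finset.card_univ, Fintype.card_fin]
        split_ifs <;> simp

lemma lapd_cone_center {d : ℕ} (y : Vd d) (R : ℤ) (hR : 1 ≤ R) :
    lapd (cone y R) y = -(2 * d) := by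
  unfold lapd
  have hterm : ∀ j : Fin d × Bool, cone y R (nbr y j) - cone y R y = -1 := by
    intro ⟨i, b⟩
    unfold cone
    rw [nbr_sub]
    have hz : y - y = 0 := by abel
    rw [hz]
    have hnd0 : nd (0 : Vd d) = 0 := by simp [nd]
    have hnd1 : nd (nbr (0 : Vd d) (i, b)) = 1 := by
      rw [nd_nbr, hnd0]; cases b <;> simp
    rw [hnd0, hnd1]
    have e1 : phi R 1 = (R : ℝ) - 1 := by
      unfold phi; rw [max_eq_left] <;> push_cast <;> [ring; skip]
      have : (1:ℝ) ≤ R := by exact_mod_cast hR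
      linarith
    have e0 : phi R 0 = (R : ℝ) := by
      unfold phi; rw [max_eq_left] <;> push_cast <;> [ring; skip]
      have : (1:ℝ) ≤ R := by exact_mod_cast hR
      linarith
    rw [e1, e0]; ring
  rw [Finset.sum_congr rfl (fun j _ => hterm j)]
  simp [Finset.card_univ]
  ring

lemma sum_indicator_le (N : ℕ) (t : ℤ) (C : ℝ) (hC : 0 ≤ C) :
    ∑ k ∈ Finset.range N, (if t = (k : ℤ) + 1 then C else 0) ≤ C := by
  classical
  by_cases h : ∃ k ∈ Finset.range N, t = (k : ℤ) + 1
  · obtain ⟨k0, hk0, ht⟩ := h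
    rw [Finset.sum_eq_single k0]
    · rw [if_pos ht]
    · intro b _ hne
      rw [if_neg]; omega
    · intro h'; exact absurd hk0 h'
  · push_neg at h
    rw [Finset.sum_eq_zero fun k hk => if_neg (h k hk)]
    exact hC

set_option maxHeartbeats 1000000 in
lemma exists_feasible {d : ℕ} (hd : 0 < d) (σ₀ : Vd d → ℝ) (hpos : ∀ v, 0 ≤ σ₀ v)
    (hmass : Summable σ₀) :
    ∃ w : Vd d → ℝ, (∀ z, 0 ≤ w z) ∧ ∀ z, lapd w z ≤ 2 * d * (1 - σ₀ z) := by
  classical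
  have hd1 : (1 : ℝ) ≤ d := by exact_mod_cast hd
  -- the set of sites with mass at least 1/2 is finite
  have hfin : {v : Vd d | 1/2 ≤ σ₀ v}.Finite := by
    have h0 := hmass.tendsto_cofinite_zero
    have h1 : ∀ᶠ x in Filter.cofinite, σ₀ x ∈ Metric.ball (0:ℝ) (1/2) :=
      h0 (Metric.ball_mem_nhds _ (by norm_num))
    have h2 : {x : Vd d | ¬ σ₀ x ∈ Metric.ball (0:ℝ) (1/2)}.Finite := h1
    apply h2.subset
    intro v hv
    simp only [Set.mem_setOf_eq, Metric.mem_ball, Real.dist_eq, sub_zero] at hv ⊢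
    rw [abs_of_nonneg (hpos v)]
    linarith
  set A : Finset (Vd d) := hfin.toFinset with hA
  set m : ℕ := A.card with hm
  set c : ℝ := 1 / (2 * (m + 1)) with hc
  have hc0 : 0 < c := by positivity
  have hmc : (m : ℝ) * c ≤ 1/2 := by
    rw [hc]
    rw [mul_one_div, div_le_div_iff₀ (by positivity) (by norm_num)]
    push_cast; linarith
  set N : Vd d → ℕ := fun y => ⌈σ₀ y / c⌉₊ with hN
  have hcN : ∀ y, σ₀ y ≤ c * N y := by
    intro y
    have := Nat.le_ceil (σ₀ y / c)
    rw [div_le_iff₀ hc0] at this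
    linarith [this]
  refine ⟨fun z => ∑ y ∈ A, ∑ k ∈ Finset.range (N y), c * cone y ((k : ℤ) + 1) z,
    fun z => Finset.sum_nonneg fun y _ => Finset.sum_nonneg fun k _ =>
      mul_nonneg hc0.le (cone_nonneg _ _ _), ?_⟩
  intro z
  have hlap : lapd (fun z => ∑ y ∈ A, ∑ k ∈ Finset.range (N y),
      c * cone y ((k : ℤ) + 1) z) z
      = ∑ y ∈ A, ∑ k ∈ Finset.range (N y), c * lapd (cone y ((k : ℤ) + 1)) z := by
    rw [lapd_finsum]
    refine Finset.sum_congr rfl fun y _ => ?_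
    rw [lapd_finsum]
    exact Finset.sum_congr rfl fun k _ => lapd_const_mul _ _ _
  rw [hlap]
  -- bound for a single center, generic point
  have hgen : ∀ y x : Vd d, ∑ k ∈ Finset.range (N y), c * lapd (cone y ((k : ℤ) + 1)) x
      ≤ c * d := by
    intro y x
    calc ∑ k ∈ Finset.range (N y), c * lapd (cone y ((k : ℤ) + 1)) x
        ≤ ∑ k ∈ Finset.range (N y), c * (if nd (x - y) = (k : ℤ) + 1 then (d:ℝ) else 0) :=
          Finset.sum_le_sum fun k _ =>
            mul_le_mul_of_nonneg_left (lapd_cone_le y _ x) hc0.le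
      _ = c * ∑ k ∈ Finset.range (N y), (if nd (x - y) = (k : ℤ) + 1 then (d:ℝ) else 0) := by
          rw [Finset.mul_sum]
      _ ≤ c * d := mul_le_mul_of_nonneg_left
            (sum_indicator_le _ _ _ (by positivity)) hc0.le
  -- bound at the center
  have hcen : ∀ y : Vd d, ∑ k ∈ Finset.range (N y), c * lapd (cone y ((k : ℤ) + 1)) y
      ≤ -(2 * d * σ₀ y) := by
    intro y
    have : ∀ k ∈ Finset.range (N y), c * lapd (cone y ((k : ℤ) + 1)) y = c * (-(2 * d)) := by
      intro k _
      rw [lapd_cone_center y _ (by omega)]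
    rw [Finset.sum_congr rfl this, Finset.sum_const, Finset.card_range, nsmul_eq_mul]
    have h1 : σ₀ y ≤ c * N y := hcN y
    have h2 : (0:ℝ) ≤ d := by positivity
    nlinarith
  by_cases hzA : z ∈ A
  · -- z has big mass: the centered cones provide enough negativity
    rw [← Finset.add_sum_erase _ _ hzA]
    have h1 : ∑ y ∈ A.erase z, ∑ k ∈ Finset.range (N y), c * lapd (cone y ((k:ℤ)+1)) z
        ≤ (m : ℝ) * (c * d) := by
      calc _ ≤ ∑ _y ∈ A.erase z, c * (d:ℝ) := Finset.sum_le_sum fun y _ => hgen y z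
        _ = (A.erase z).card * (c * d) := by rw [Finset.sum_const, nsmul_eq_mul]
        _ ≤ (m : ℝ) * (c * d) := by
            apply mul_le_mul_of_nonneg_right _ (by positivity)
            exact_mod_cast Finset.card_le_card (Finset.erase_subset _ _)
    have h2 := hcen z
    have h3 : (m : ℝ) * (c * d) ≤ d / 2 := by nlinarith
    nlinarith [hpos z]
  · -- z has small mass
    have hsmall : σ₀ z < 1/2 := by
      by_contra h
      exact hzA (hfin.mem_toFinset.mpr (le_of_not_gt h))
    have h1 : ∑ y ∈ A, ∑ k ∈ Finset.range (N y), c * lapd (cone y ((k:ℤ)+1)) z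
        ≤ (m : ℝ) * (c * d) := by
      calc _ ≤ ∑ _y ∈ A, c * (d:ℝ) := Finset.sum_le_sum fun y _ => hgen y z
        _ = (m : ℝ) * (c * d) := by rw [Finset.sum_const, nsmul_eq_mul]
    have h3 : (m : ℝ) * (c * d) ≤ d / 2 := by nlinarith
    nlinarith

lemma sInf_image_sub (s : Set ℝ) (hne : s.Nonempty) (hbd : BddBelow s) (a : ℝ) :
    sInf ((fun x => x - a) '' s) = sInf s - a := by
  have hbd' : BddBelow ((fun x => x - a) '' s) := by
    obtain ⟨b, hb⟩ := hbd
    exact ⟨b - a, by rintro y ⟨x, hx, rfl⟩; exact sub_le_sub_right (hb hx) a⟩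
  apply le_antisymm
  · have : sInf ((fun x => x - a) '' s) + a ≤ sInf s := by
      apply le_csInf hne
      intro x hx
      have h1 : sInf ((fun x => x - a) '' s) ≤ x - a := csInf_le hbd' ⟨x, hx, rfl⟩
      linarith
    linarith
  · apply le_csInf (hne.image _)
    rintro y ⟨x, hx, rfl⟩
    exact sub_le_sub_right (csInf_le hbd hx) a


/-- Obstacle problem formulation of the divisible sandpile: if `(1/2d)Δγ = σ₀ − 1`,
then the odometer `u` (characterized by the least action principle) equals `s − γ`, where
`s` solves the obstacle problem with obstacle `γ`; moreover `f` is feasible for the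
obstacle problem iff `w = f − γ` is nonnegative with `σ₀ + (1/2d)Δw ≤ 1`. -/
theorem divisible_sandpile_obstacle {d : ℕ} (hd : 0 < d) (σ₀ : Vd d → ℝ)
    (hpos : ∀ v, 0 ≤ σ₀ v) (hmass : Summable σ₀) (γ : Vd d → ℝ)
    (hγ : ∀ v, (1 / (2 * d)) * lapd γ v = σ₀ v - 1) :
    (∀ v : Vd d,
      sInf {c : ℝ | ∃ w : Vd d → ℝ, (∀ z, 0 ≤ w z) ∧
        (∀ z, σ₀ z + (1 / (2 * d)) * lapd w z ≤ 1) ∧ c = w v} =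
      sInf {c : ℝ | ∃ f : Vd d → ℝ, (∀ z, γ z ≤ f z) ∧ (∀ z, lapd f z ≤ 0) ∧ c = f v}
        - γ v) ∧
    (∀ f : Vd d → ℝ,
      ((∀ z, γ z ≤ f z) ∧ (∀ z, lapd f z ≤ 0)) ↔
      ((∀ z, 0 ≤ f z - γ z) ∧ (∀ z, σ₀ z + (1 / (2 * d)) * lapd (f - γ) z ≤ 1))) := by
  have h2d : (0 : ℝ) < 2 * d := by positivity
  -- the equivalence (part 2)
  have key : ∀ f : Vd d → ℝ,
      ((∀ z, γ z ≤ f z) ∧ (∀ z, lapd f z ≤ 0)) ↔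
      ((∀ z, 0 ≤ f z - γ z) ∧ (∀ z, σ₀ z + (1 / (2 * d)) * lapd (f - γ) z ≤ 1)) := by
    intro f
    have heq : ∀ z, σ₀ z + (1 / (2 * d)) * lapd (f - γ) z
        = 1 + (1 / (2 * d)) * lapd f z := by
      intro z
      rw [lapd_sub, mul_sub, hγ z]
      ring
    constructor
    · rintro ⟨h1, h2⟩
      refine ⟨fun z => by linarith [h1 z], fun z => ?_⟩
      rw [heq z]
      have : (1 / (2 * d)) * lapd f z ≤ 0 :=
        mul_nonpos_of_nonneg_of_nonpos (by positivity) (h2 z)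
      linarith
    · rintro ⟨h1, h2⟩
      refine ⟨fun z => by linarith [h1 z], fun z => ?_⟩
      have h3 := h2 z
      rw [heq z] at h3
      have h4 : (1 / (2 * d)) * lapd f z ≤ 0 := by linarith
      by_contra h5
      push_neg at h5
      have : 0 < (1 / (2 * d)) * lapd f z := by positivity
      linarith
  refine ⟨?_, key⟩
  intro v
  set S2 : Set ℝ := {c : ℝ | ∃ f : Vd d → ℝ,
    (∀ z, γ z ≤ f z) ∧ (∀ z, lapd f z ≤ 0) ∧ c = f v} with hS2
  -- the two feasible sets correspond under subtraction of γ
  have hset : {c : ℝ | ∃ w : Vd d → ℝ, (∀ z, 0 ≤ w z) ∧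
      (∀ z, σ₀ z + (1 / (2 * d)) * lapd w z ≤ 1) ∧ c = w v}
      = (fun x => x - γ v) '' S2 := by
    ext cval
    constructor
    · rintro ⟨w, hw0, hw1, rfl⟩
      refine ⟨γ v + w v, ⟨γ + w, fun z => ?_, fun z => ?_, rfl⟩, by ring⟩
      · have := hw0 z; simpa using this
      · have hiff := (key (γ + w)).mpr ⟨fun z => by simpa using hw0 z, fun z => ?_⟩
        · exact hiff.2 z
        · have : γ + w - γ = w := by funext z; simp
          rw [this]
          exact hw1 z
    · rintro ⟨cf, ⟨f, hf1, hf2, rfl⟩, rfl⟩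
      refine ⟨f - γ, ?_, ?_, by simp⟩
      · exact ((key f).mp ⟨hf1, hf2⟩).1
      · exact ((key f).mp ⟨hf1, hf2⟩).2
  rw [hset]
  -- S2 is nonempty and bounded below
  obtain ⟨w₀, hw₀0, hw₀1⟩ := exists_feasible hd σ₀ hpos hmass
  have hne : S2.Nonempty := by
    refine ⟨(γ + w₀) v, γ + w₀, fun z => by simpa using hw₀0 z, fun z => ?_, rfl⟩
    have := (key (γ + w₀)).mpr ⟨fun z => by simpa using hw₀0 z, fun z => ?_⟩
    · exact this.2 z
    · have he : γ + w₀ - γ = w₀ := by funext z'; simp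
      rw [he]
      have h := hw₀1 z
      have h2 : 1 / (2 * (d:ℝ)) * lapd w₀ z ≤ 1 / (2 * (d:ℝ)) * (2 * d * (1 - σ₀ z)) :=
        mul_le_mul_of_nonneg_left h (by positivity)
      have h3 : 1 / (2 * (d:ℝ)) * (2 * d * (1 - σ₀ z)) = 1 - σ₀ z := by
        field_simp
      linarith
  have hbd : BddBelow S2 := by
    refine ⟨γ v, ?_⟩
    rintro cval ⟨f, hf1, _, rfl⟩
    exact hf1 v
  exact sInf_image_sub S2 hne hbd (γ v)
end

section
/- Let u be the odometer of rotor aggregation of n particles in ℤ^d with a simple rotor mechanism, and define θ(x,y) = N(x,y) − N(y,x), where N(x,y) is the total number of particle moves from x to its neighbor y. Then for every directed edge (x,y), |u(x) − u(y) − 2d·θ(x,y)| ≤ 4d − 2. -/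
/-- A configuration during rotor aggregation: the rotor directions (as indices into each
vertex's periodic mechanism), the set of occupied sites, and the current walker (if any). -/
structure RConf (d : ℕ) where
  rotors : Vd d → ZMod (2 * d)
  occ : Finset (Vd d)
  walker : Option (Vd d)

/-- One step of rotor aggregation with mechanism `mech`: launch a new particle at the
origin, settle the walker at an unoccupied site, or advance the rotor at the walker's
(occupied) site and move the walker to the neighbor it now points to. -/
inductive RStep {d : ℕ} (mech : Vd d → ZMod (2 * d) → Fin d × Bool) :
    RConf d → RConf d → Prop
  | launch (c : RConf d) (h : c.walker = none) :
      RStep mech c ⟨c.rotors, c.occ, some 0⟩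
  | settle (c : RConf d) (p : Vd d) (h : c.walker = some p) (hp : p ∉ c.occ) :
      RStep mech c ⟨c.rotors, insert p c.occ, none⟩
  | move (c : RConf d) (p : Vd d) (h : c.walker = some p) (hp : p ∈ c.occ) :
      RStep mech c ⟨Function.update c.rotors p (c.rotors p + 1), c.occ,
        some (nbr p (mech p (c.rotors p + 1)))⟩

/-- A complete execution of rotor aggregation of `n` particles started at the origin of
`ℤᵈ`, with rotor mechanism `mech` and initial rotor configuration `r₀`. -/
structure RotorExec (d n : ℕ) (mech : Vd d → ZMod (2 * d) → Fin d × Bool)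
    (r₀ : Vd d → ZMod (2 * d)) where
  T : ℕ
  conf : ℕ → RConf d
  init : conf 0 = ⟨r₀, ∅, none⟩
  step : ∀ i < T, RStep mech (conf i) (conf (i + 1))
  walker_final : (conf T).walker = none
  card_final : (conf T).occ.card = n

/-- A rotor mechanism is simple if each of the `2d` neighbors occurs exactly once per
period. -/
def SimpleMech {d : ℕ} (mech : Vd d → ZMod (2 * d) → Fin d × Bool) : Prop :=
  ∀ v, Function.Bijective (mech v)

variable {d n : ℕ} {mech : Vd d → ZMod (2 * d) → Fin d × Bool} {r₀ : Vd d → ZMod (2 * d)}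

/-- The final cluster `Rₙ` of occupied sites. -/
def RotorExec.cluster (E : RotorExec d n mech r₀) : Finset (Vd d) := (E.conf E.T).occ

/-- The odometer: total number of exits from `x` by all particles. -/
def RotorExec.u (E : RotorExec d n mech r₀) (x : Vd d) : ℕ :=
  ((Finset.range E.T).filter
    (fun i => (E.conf i).walker = some x ∧ x ∈ (E.conf i).occ)).card

/-- `N(x,y)`: total number of particle moves from `x` to `y`. -/
def RotorExec.N (E : RotorExec d n mech r₀) (x y : Vd d) : ℕ :=
  ((Finset.range E.T).filter (fun i => (E.conf i).walker = some x ∧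
    x ∈ (E.conf i).occ ∧ (E.conf (i + 1)).walker = some y)).card

/-- `θ(x,y) = N(x,y) − N(y,x)`: net number of crossings of the directed edge `(x,y)`. -/
def RotorExec.theta (E : RotorExec d n mech r₀) (x y : Vd d) : ℤ :=
  (E.N x y : ℤ) - (E.N y x : ℤ)

/-!
The rotor at `x` advances once per exit from `x`, so the `k`-th particle to leave `x`
(counting from `1`) goes in direction `mech x (r₀ x + k)`. For a simple mechanism every
direction occurs exactly once among any `2d` consecutive indices, so `N(x, y)` is `⌊u(x)/2d⌋`
or `⌊u(x)/2d⌋ + 1`, whence `|u(x) − 2d·N(x,y)| ≤ 2d − 1`. Subtracting the same bound at `y`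
for the reversed edge gives the theorem.
-/

theorem nbr_injective (x : Vd d) : Function.Injective (nbr x) := by
  rintro ⟨i, b⟩ ⟨i', b'⟩ h
  have hi := congrFun h i
  have hi' := congrFun h i'
  by_cases hii : i = i'
  · subst hii
    cases b <;> cases b' <;> simp_all [nbr] <;> omega
  · cases b <;> cases b' <;> simp [nbr, hii] at hi hi'

theorem nbr_nbr_opposite (x : Vd d) (j : Fin d × Bool) : nbr (nbr x j) (j.1, !j.2) = x := by
  rcases j with ⟨i, b⟩
  cases b <;> simp [nbr]

theorem Function.Bijective.abs_sub_mul_count_lt {k : ℕ} [NeZero k] {β : Type*} [DecidableEq β]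
    {f : ZMod k → β} (hf : Function.Bijective f) (a : ZMod k) (b : β) (m : ℕ) :
    |(m : ℤ) - k * Nat.count (fun i => f (a + i) = b) m| < k := by
  obtain ⟨c, rfl⟩ := hf.surjective b
  have hpred : (fun i : ℕ => f (a + i) = f c) = (· ≡ (c - a).val [MOD k]) := by
    ext i
    rw [hf.injective.eq_iff, ← ZMod.natCast_eq_natCast_iff, ZMod.natCast_zmod_val,
      eq_sub_iff_add_eq']
  simp only [hpred, Nat.count_modEq_card _ (NeZero.pos k)]
  have hdiv := Nat.div_add_mod m k
  have hmod := Nat.mod_lt m (NeZero.pos k)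
  generalize m / k = q at hdiv ⊢
  generalize m % k = r at hdiv hmod ⊢
  subst hdiv
  rw [abs_lt]
  split_ifs with hlt
  · have hr : 0 < r := Nat.zero_lt_of_lt hlt
    push_cast; constructor <;> linarith [Int.ofNat_lt.mpr hmod, Int.ofNat_lt.mpr hr]
  · push_cast; constructor <;> linarith [Int.natCast_nonneg r, Int.ofNat_lt.mpr hmod]

namespace RStep

variable {c c' : RConf d}

theorem rotors_of_exit (h : RStep mech c c') {x : Vd d} (hw : c.walker = some x)
    (hx : x ∈ c.occ) : c'.rotors x = c.rotors x + 1 := by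
  cases h with
  | launch h => simp_all
  | settle p h hp => grind
  | move p h hp => grind

theorem rotors_of_not_exit (h : RStep mech c c') {x : Vd d}
    (hexit : ¬(c.walker = some x ∧ x ∈ c.occ)) : c'.rotors x = c.rotors x := by
  cases h with
  | launch h => rfl
  | settle p h hp => rfl
  | move p h hp => grind

theorem walker_of_exit (h : RStep mech c c') {x : Vd d} (hw : c.walker = some x)
    (hx : x ∈ c.occ) : c'.walker = some (nbr x (mech x (c.rotors x + 1))) := by
  cases h with
  | launch h => simp_all
  | settle p h hp => grind
  | move p h hp => grind

end RStep

namespace RotorExec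

variable (E : RotorExec d n mech r₀)

def IsExitFrom (x : Vd d) (t : ℕ) : Prop :=
  (E.conf t).walker = some x ∧ x ∈ (E.conf t).occ

instance (x : Vd d) : DecidablePred (E.IsExitFrom x) :=
  fun _ => inferInstanceAs (Decidable (_ ∧ _))

theorem u_eq_count (x : Vd d) : E.u x = Nat.count (E.IsExitFrom x) E.T := by
  rw [Nat.count_eq_card_filter_range]; rfl

theorem N_eq_count (x y : Vd d) :
    E.N x y = Nat.count (fun t => E.IsExitFrom x t ∧ (E.conf (t + 1)).walker = some y) E.T := by
  simp only [N, Nat.count_eq_card_filter_range, IsExitFrom, and_assoc]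

theorem rotors_conf (x : Vd d) {i : ℕ} (hi : i ≤ E.T) :
    (E.conf i).rotors x = r₀ x + Nat.count (E.IsExitFrom x) i := by
  induction i with
  | zero => simp [E.init]
  | succ i ih =>
    have hstep := E.step i hi
    by_cases hexit : E.IsExitFrom x i
    · rw [hstep.rotors_of_exit hexit.1 hexit.2, ih (by omega), Nat.count_succ, if_pos hexit]
      push_cast; ring
    · rw [hstep.rotors_of_not_exit hexit, ih (by omega), Nat.count_succ, if_neg hexit]
      simp

theorem walker_succ_of_exit {x : Vd d} {i : ℕ} (hi : i < E.T) (hexit : E.IsExitFrom x i) :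
    (E.conf (i + 1)).walker =
      some (nbr x (mech x (r₀ x + 1 + Nat.count (E.IsExitFrom x) i))) := by
  rw [(E.step i hi).walker_of_exit hexit.1 hexit.2, E.rotors_conf x hi.le, add_right_comm]

theorem count_moves_to_nbr (x : Vd d) (j : Fin d × Bool) {i : ℕ} (hi : i ≤ E.T) :
    Nat.count (fun t => E.IsExitFrom x t ∧ (E.conf (t + 1)).walker = some (nbr x j)) i =
      Nat.count (fun k => mech x (r₀ x + 1 + k) = j) (Nat.count (E.IsExitFrom x) i) := by
  induction i with
  | zero => simp
  | succ i ih =>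
    rw [Nat.count_succ, Nat.count_succ, ih (by omega)]
    by_cases hexit : E.IsExitFrom x i
    · rw [if_pos hexit, Nat.count_succ, E.walker_succ_of_exit (by omega) hexit]
      simp [hexit, (nbr_injective x).eq_iff]
    · simp [hexit]

theorem abs_u_sub_two_mul_N_lt (hmech : SimpleMech mech) (x : Vd d) (j : Fin d × Bool) :
    |(E.u x : ℤ) - 2 * d * E.N x (nbr x j)| < 2 * d := by
  have : NeZero (2 * d) := ⟨by have := j.1.pos; omega⟩
  rw [N_eq_count, count_moves_to_nbr E x j le_rfl, ← u_eq_count]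
  exact_mod_cast (hmech x).abs_sub_mul_count_lt (r₀ x + 1) j (E.u x)

end RotorExec

theorem odometer_gradient_bound_general (hmech : SimpleMech mech)
    (E : RotorExec d n mech r₀) (x : Vd d) (j : Fin d × Bool) :
    |(E.u x : ℤ) - (E.u (nbr x j) : ℤ) - 2 * d * E.theta x (nbr x j)| ≤ 4 * d - 2 := by
  have hx := E.abs_u_sub_two_mul_N_lt hmech x j
  have hy := E.abs_u_sub_two_mul_N_lt hmech (nbr x j) (j.1, !j.2)
  rw [nbr_nbr_opposite] at hy
  rw [abs_lt] at hx hy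
  rw [RotorExec.theta, abs_le]
  constructor <;> linarith [hx.1, hx.2, hy.1, hy.2]

/-- For rotor aggregation with a simple mechanism, the gradient of the odometer along a
directed edge agrees with `2d` times the net crossing number up to an error `≤ 4d − 2`:
`|u(x) − u(y) − 2d·θ(x,y)| ≤ 4d − 2`. -/
theorem odometer_gradient_bound (hd : 0 < d) (hmech : SimpleMech mech)
    (E : RotorExec d n mech r₀) (x : Vd d) (j : Fin d × Bool) :
    |(E.u x : ℤ) - (E.u (nbr x j) : ℤ) - 2 * d * E.theta x (nbr x j)| ≤ 4 * d - 2 :=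
  odometer_gradient_bound_general hmech E x j
end

section
/- Shell growth lemma: In rotor aggregation with cluster R_n and odometer u, fix x ∈ R_n and ρ < |x|, and let m = max of u over the external vertex boundary ∂B°(x,ρ). Then N(x,ρ+1) ≥ (1 + 1/m)·N(x,ρ), where N(x,ρ) = #(B°(x,ρ) ∩ R_n). -/
variable {d n : ℕ} {mech : Vd d → ZMod (2 * d) → Fin d × Bool} {r₀ : Vd d → ZMod (2 * d)}

/-- The squared Euclidean norm of a lattice point (an integer). -/
def inorm2 {d : ℕ} (x : Vd d) : ℤ := ∑ i, (x i) ^ 2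

/-- The lattice ball `B(x,k) ∩ ℤᵈ` of Euclidean radius `k` about `x`. -/
noncomputable def dball {d : ℕ} (x : Vd d) (k : ℕ) : Finset (Vd d) :=
  (Finset.Icc (x - fun _ => (k : ℤ)) (x + fun _ => (k : ℤ))).filter
    (fun y => inorm2 (y - x) < (k : ℤ) ^ 2)

/-- The average of `f` over the lattice ball `B(x,k) ∩ ℤᵈ`. -/
noncomputable def Sk {d : ℕ} (k : ℕ) (f : Vd d → ℝ) (x : Vd d) : ℝ :=
  (∑ y ∈ dball x k, f y) / (dball x k).card

/-- The external vertex boundary of the lattice ball `B(x,ρ) ∩ ℤᵈ`. -/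
noncomputable def dbdry {d : ℕ} (x : Vd d) (ρ : ℕ) : Finset (Vd d) :=
  (dball x (ρ + 1)).filter
    (fun y => y ∉ dball x ρ ∧ ∃ j : Fin d × Bool, nbr y j ∈ dball x ρ)

/-! Write `B = B°(x,ρ)`. Along the whole execution, the times at which the walker leaves `B`
and the times at which it enters `B` alternate, and the walker starts outside `B` (no particle
is launched in `B`), so there are at most as many exits as entries. Each particle settling
in `B` leaves `B` at its settling step, and each entry into `B` is a move out of a vertex of
`∂B`, whence `N(x,ρ) ≤ ∑_{∂B} u ≤ m · #(∂B ∩ Rₙ)`, as only occupied vertices are ever exited.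
Since `∂B` lies in `B°(x,ρ+1) \ B`, adding `#(∂B ∩ Rₙ) ≥ N(x,ρ)/m` to `N(x,ρ)` stays below
`N(x,ρ+1)`. -/

lemma sq_apply_le_inorm2 (v : Vd d) (i : Fin d) : v i ^ 2 ≤ inorm2 v :=
  Finset.single_le_sum (fun k _ => sq_nonneg (v k)) (Finset.mem_univ i)

lemma inorm2_add_single (v : Vd d) (i : Fin d) (c : ℤ) :
    inorm2 (v + Pi.single i c) = inorm2 v + 2 * c * v i + c ^ 2 := by
  have h : ∀ k, (v + Pi.single i c : Vd d) k ^ 2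
      = v k ^ 2 + (Pi.single i (2 * c * v i + c ^ 2) : Vd d) k := by
    intro k
    rcases eq_or_ne k i with rfl | hk
    · simp only [Pi.add_apply, Pi.single_eq_same]; ring
    · simp [Pi.single_eq_of_ne hk]
  simp only [inorm2, h, Finset.sum_add_distrib, Finset.sum_pi_single', Finset.mem_univ, if_true]
  ring

lemma nbr_eq_add_single (y : Vd d) (j : Fin d × Bool) :
    ∃ c : ℤ, c ^ 2 = 1 ∧ nbr y j = y + Pi.single j.1 c := by
  rcases j with ⟨i, _ | _⟩
  · exact ⟨-1, by norm_num, by simp [nbr, sub_eq_add_neg, Pi.single_neg]⟩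
  · exact ⟨1, by norm_num, by simp [nbr]⟩

lemma mem_dball_iff {x y : Vd d} {k : ℕ} :
    y ∈ dball x k ↔ inorm2 (y - x) < (k : ℤ) ^ 2 := by
  refine ⟨fun h => (Finset.mem_filter.mp h).2, fun h => Finset.mem_filter.mpr ⟨?_, h⟩⟩
  have hcoord : ∀ i, |y i - x i| < k := fun i =>
    abs_lt_of_sq_lt_sq ((sq_apply_le_inorm2 (y - x) i).trans_lt h) (by positivity)
  refine Finset.mem_Icc.mpr ⟨fun i => ?_, fun i => ?_⟩ <;>
  · have := abs_lt.mp (hcoord i)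
    simp only [Pi.sub_apply, Pi.add_apply]
    omega

lemma zero_notMem_dball {x : Vd d} {ρ : ℕ} (hρ : (ρ : ℤ) ^ 2 < inorm2 x) :
    (0 : Vd d) ∉ dball x ρ := by
  have : inorm2 (0 - x) = inorm2 x := by simp [inorm2]
  rw [mem_dball_iff, this]
  exact hρ.not_gt

lemma dball_subset_dball_succ (x : Vd d) (ρ : ℕ) : dball x ρ ⊆ dball x (ρ + 1) := by
  intro y hy
  rw [mem_dball_iff] at hy ⊢
  push_cast
  nlinarith [Int.natCast_nonneg ρ]

lemma inorm2_lt_succ_sq_of_add_single {v : Vd d} {i : Fin d} {c : ℤ} {ρ : ℕ}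
    (hc : c ^ 2 = 1) (h : inorm2 (v + Pi.single i c) < (ρ : ℤ) ^ 2) :
    inorm2 v < ((ρ + 1 : ℕ) : ℤ) ^ 2 := by
  set w := v + Pi.single i c
  have hv : v = w + Pi.single i (-c) := by simp [w, Pi.single_neg]
  have hwi : |c * w i| < ρ := by
    refine abs_lt_of_sq_lt_sq ?_ (by positivity)
    rw [mul_pow, hc, one_mul]
    exact (sq_apply_le_inorm2 w i).trans_lt h
  rw [hv, inorm2_add_single, neg_sq, hc]
  push_cast
  linarith [neg_abs_le (c * w i)]

lemma mem_dbdry_of_nbr_mem {x q : Vd d} {ρ : ℕ} {j : Fin d × Bool}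
    (hq : q ∉ dball x ρ) (hnbr : nbr q j ∈ dball x ρ) : q ∈ dbdry x ρ := by
  refine Finset.mem_filter.mpr ⟨?_, hq, j, hnbr⟩
  obtain ⟨c, hc, hqj⟩ := nbr_eq_add_single q j
  rw [mem_dball_iff, hqj, add_sub_right_comm] at hnbr
  exact mem_dball_iff.mpr (inorm2_lt_succ_sq_of_add_single hc hnbr)

lemma card_filter_range_exits_add {P : ℕ → Prop} [DecidablePred P] (h0 : ¬P 0) (T : ℕ) :
    ((Finset.range T).filter (fun i => P i ∧ ¬P (i + 1))).card + (if P T then 1 else 0) =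
      ((Finset.range T).filter (fun i => ¬P i ∧ P (i + 1))).card := by
  induction T with
  | zero => simp [h0]
  | succ T ih =>
    simp only [Finset.card_filter, Finset.sum_range_succ] at ih ⊢
    by_cases hT : P T <;> by_cases hT' : P (T + 1) <;>
      simp only [hT, hT', not_true_eq_false, not_false_eq_true, and_self, and_true, and_false,
        if_true, if_false] at ih ⊢ <;> omega

lemma card_filter_range_exits_le {P : ℕ → Prop} [DecidablePred P] (h0 : ¬P 0) (T : ℕ) :
    ((Finset.range T).filter (fun i => P i ∧ ¬P (i + 1))).card ≤
      ((Finset.range T).filter (fun i => ¬P i ∧ P (i + 1))).card :=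
  (card_filter_range_exits_add h0 T).symm ▸ Nat.le_add_right _ _

namespace RStep

variable {c c' : RConf d}

lemma occ_subset (h : RStep mech c c') : c.occ ⊆ c'.occ := by
  cases h <;> simp [Finset.subset_insert]

lemma walker_eq_of_mem_occ_of_notMem {p : Vd d} (h : RStep mech c c') (hp' : p ∈ c'.occ)
    (hp : p ∉ c.occ) : c.walker = some p ∧ c'.walker = none := by
  cases h with
  | launch _ => exact absurd hp' hp
  | settle q hq _ => rcases Finset.mem_insert.mp hp' with rfl | h' <;> simp_all
  | move _ _ _ => exact absurd hp' hp

lemma eq_zero_or_eq_nbr_of_walker_eq {q : Vd d} (h : RStep mech c c') (hq : c'.walker = some q) :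
    q = 0 ∨ ∃ p j, c.walker = some p ∧ p ∈ c.occ ∧ q = nbr p j := by
  cases h with
  | launch _ => exact .inl (Option.some.inj hq).symm
  | settle _ _ _ => cases hq
  | move p hw hp => exact .inr ⟨p, _, hw, hp, (Option.some.inj hq).symm⟩

end RStep

namespace RotorExec

variable (E : RotorExec d n mech r₀)

def WalkerIn (S : Finset (Vd d)) (i : ℕ) : Prop := ∃ q ∈ S, (E.conf i).walker = some q

lemma occ_subset_cluster {i : ℕ} (hi : i ≤ E.T) : (E.conf i).occ ⊆ E.cluster := by
  induction hi using Nat.decreasingInduction with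
  | self => exact subset_rfl
  | of_succ k hk ih => exact ((E.step k hk).occ_subset).trans ih

lemma mem_cluster_of_u_ne_zero {y : Vd d} (hy : E.u y ≠ 0) : y ∈ E.cluster := by
  obtain ⟨i, hi⟩ := Finset.card_ne_zero.mp hy
  obtain ⟨hiT, -, hocc⟩ := Finset.mem_filter.mp hi
  exact E.occ_subset_cluster (Finset.mem_range.mp hiT).le hocc

lemma exists_settle_time {p : Vd d} {j : ℕ} (hj : j ≤ E.T) (hp : p ∈ (E.conf j).occ) :
    ∃ t < j, (E.conf t).walker = some p ∧ (E.conf (t + 1)).walker = none := by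
  induction j with
  | zero => simp [E.init] at hp
  | succ j ih =>
    by_cases hpj : p ∈ (E.conf j).occ
    · obtain ⟨t, ht, hsettle⟩ := ih (Nat.le_of_succ_le hj) hpj
      exact ⟨t, ht.trans j.lt_succ_self, hsettle⟩
    · exact ⟨j, j.lt_succ_self, (E.step j hj).walker_eq_of_mem_occ_of_notMem hp hpj⟩

open scoped Classical in
lemma card_inter_cluster_le_card_exits (S : Finset (Vd d)) :
    (S ∩ E.cluster).card ≤ ((Finset.range E.T).filter (fun i =>
      E.WalkerIn S i ∧ ¬E.WalkerIn S (i + 1))).card := by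
  have hsettle : ∀ p ∈ S ∩ E.cluster, ∃ t < E.T,
      (E.conf t).walker = some p ∧ (E.conf (t + 1)).walker = none := fun p hp =>
    E.exists_settle_time le_rfl (Finset.mem_inter.mp hp).2
  choose! st hst hst_walker hst_none using hsettle
  refine Finset.card_le_card_of_injOn st (fun p hp => ?_) (fun p hp p' hp' h => ?_)
  · have hp := Finset.mem_coe.mp hp
    refine Finset.mem_filter.mpr ⟨Finset.mem_range.mpr (hst p hp),
      ⟨p, (Finset.mem_inter.mp hp).1, hst_walker p hp⟩, ?_⟩
    rintro ⟨q, -, hq⟩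
    simp [hst_none p hp] at hq
  · exact Option.some.inj ((hst_walker p hp).symm.trans (h ▸ hst_walker p' hp'))

open scoped Classical in
lemma card_entries_le_sum_u {S D : Finset (Vd d)} (h0 : (0 : Vd d) ∉ S)
    (hD : ∀ y ∉ S, ∀ j, nbr y j ∈ S → y ∈ D) :
    ((Finset.range E.T).filter (fun i => ¬E.WalkerIn S i ∧ E.WalkerIn S (i + 1))).card ≤
      ∑ y ∈ D, E.u y := by
  refine (Finset.card_le_card fun i hi => ?_).trans Finset.card_biUnion_le
  obtain ⟨hiT, hout, q, hqS, hq⟩ := Finset.mem_filter.mp hi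
  rcases (E.step i (Finset.mem_range.mp hiT)).eq_zero_or_eq_nbr_of_walker_eq hq with
    rfl | ⟨p, j, hp, hpocc, rfl⟩
  · exact absurd hqS h0
  · have hpS : p ∉ S := fun hpS => hout ⟨p, hpS, hp⟩
    exact Finset.mem_biUnion.mpr ⟨p, hD p hpS j hqS, Finset.mem_filter.mpr ⟨hiT, hp, hpocc⟩⟩

lemma card_inter_cluster_le_sum_u {S D : Finset (Vd d)} (h0 : (0 : Vd d) ∉ S)
    (hD : ∀ y ∉ S, ∀ j, nbr y j ∈ S → y ∈ D) :
    (S ∩ E.cluster).card ≤ ∑ y ∈ D, E.u y := by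
  classical
  have h0' : ¬E.WalkerIn S 0 := by simp [WalkerIn, E.init]
  exact (E.card_inter_cluster_le_card_exits S).trans
    ((card_filter_range_exits_le h0' E.T).trans (E.card_entries_le_sum_u h0 hD))

lemma sum_u_le_sup_mul_card (D : Finset (Vd d)) :
    ∑ y ∈ D, E.u y ≤ (D ∩ E.cluster).card * D.sup E.u := by
  calc ∑ y ∈ D, E.u y = ∑ y ∈ D ∩ E.cluster, E.u y := by
        refine (Finset.sum_subset Finset.inter_subset_left fun y hy hyR => ?_).symm
        by_contra hu
        exact hyR (Finset.mem_inter.mpr ⟨hy, E.mem_cluster_of_u_ne_zero hu⟩)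
    _ ≤ ∑ _y ∈ D ∩ E.cluster, D.sup E.u :=
        Finset.sum_le_sum fun y hy => Finset.le_sup (Finset.mem_inter.mp hy).1
    _ = (D ∩ E.cluster).card * D.sup E.u := by rw [Finset.sum_const, smul_eq_mul]

end RotorExec

lemma card_dbdry_inter_add_card_dball_inter_le (x : Vd d) (ρ : ℕ) (R : Finset (Vd d)) :
    (dbdry x ρ ∩ R).card + (dball x ρ ∩ R).card ≤ (dball x (ρ + 1) ∩ R).card := by
  rw [← Finset.card_union_of_disjoint]
  · refine Finset.card_le_card (Finset.union_subset ?_ ?_)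
    · exact Finset.inter_subset_inter_right (Finset.filter_subset _ _)
    · exact Finset.inter_subset_inter_right (dball_subset_dball_succ x ρ)
  · refine Finset.disjoint_left.mpr fun y hy hy' => ?_
    exact (Finset.mem_filter.mp (Finset.mem_inter.mp hy).1).2.1 (Finset.mem_inter.mp hy').1

theorem shell_growth_general {d n : ℕ} {mech : Vd d → ZMod (2 * d) → Fin d × Bool}
    {r₀ : Vd d → ZMod (2 * d)} (E : RotorExec d n mech r₀) (x : Vd d)
    (ρ : ℕ) (hρ : (ρ : ℤ) ^ 2 < inorm2 x) :
    (1 + 1 / (((dbdry x ρ).sup E.u : ℕ) : ℝ)) * ((dball x ρ ∩ E.cluster).card : ℝ) ≤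
      ((dball x (ρ + 1) ∩ E.cluster).card : ℝ) := by
  set m := (dbdry x ρ).sup E.u
  set a := (dball x ρ ∩ E.cluster).card
  set b := (dbdry x ρ ∩ E.cluster).card
  have hab : (a : ℝ) ≤ b * m := by
    exact_mod_cast (E.card_inter_cluster_le_sum_u (zero_notMem_dball hρ)
      fun _ hy _ => mem_dbdry_of_nbr_mem hy).trans (E.sum_u_le_sup_mul_card _)
  have hshell : (b + a : ℝ) ≤ (dball x (ρ + 1) ∩ E.cluster).card := by
    exact_mod_cast card_dbdry_inter_add_card_dball_inter_le x ρ E.cluster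
  calc (1 + 1 / (m : ℝ)) * a = a + a / m := by ring
    _ ≤ a + b := add_le_add_right (div_le_of_le_mul₀ m.cast_nonneg b.cast_nonneg hab) _
    _ ≤ _ := by linarith

/-- Shell growth lemma: for `x ∈ Rₙ` and `ρ < |x|`, with `m` the maximum of the odometer
over `∂B°(x,ρ)` and `N(x,ρ) = #(B°(x,ρ) ∩ Rₙ)`, one has
`N(x,ρ+1) ≥ (1 + 1/m)·N(x,ρ)`. -/
theorem shell_growth {d n : ℕ} {mech : Vd d → ZMod (2 * d) → Fin d × Bool}
    {r₀ : Vd d → ZMod (2 * d)} (hd : 0 < d) (hmech : SimpleMech mech)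
    (E : RotorExec d n mech r₀) (x : Vd d) (hx : x ∈ E.cluster)
    (ρ : ℕ) (hρ : (ρ : ℤ) ^ 2 < inorm2 x) :
    (1 + 1 / (((dbdry x ρ).sup E.u : ℕ) : ℝ)) * ((dball x ρ ∩ E.cluster).card : ℝ) ≤
      ((dball x (ρ + 1) ∩ E.cluster).card : ℝ) :=
  shell_growth_general E x ρ hρ
end

section
/- On a finite connected graph G with sink z, the permutations a_x (add one grain at x, then stabilize) of the set of recurrent sandpiles commute: a_x ∘ a_y = a_y ∘ a_x for all vertices x, y ≠ z, and satisfy a_x^{deg(x)} = Π_{u ∼ x, u ≠ z} a_u. -/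
variable {V : Type*} [Fintype V] [DecidableEq V]

/-- Toppling vertex `x` in a sandpile with sink `z`: `x` loses `deg x` grains and each
non-sink neighbor gains one (grains sent to the sink disappear). -/
def toppleZ (G : SimpleGraph V) [DecidableRel G.Adj] (z : V) (c : V → ℕ) (x : V) : V → ℕ :=
  fun v => (if v = x then c v - G.degree x else c v) + (if G.Adj x v ∧ v ≠ z then 1 else 0)

/-- One legal toppling step: some non-sink unstable vertex topples. -/
def TopStep (G : SimpleGraph V) [DecidableRel G.Adj] (z : V) (c c' : V → ℕ) : Prop :=
  ∃ x, x ≠ z ∧ G.degree x ≤ c x ∧ c' = toppleZ G z c x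

/-- A sandpile is stable if every non-sink vertex has fewer grains than its degree. -/
def Stable (G : SimpleGraph V) [DecidableRel G.Adj] (z : V) (c : V → ℕ) : Prop :=
  ∀ v, v ≠ z → c v < G.degree v

/-- `c` stabilizes to `c'`: `c'` is stable and obtained from `c` by legal topplings. -/
def StabilizesTo (G : SimpleGraph V) [DecidableRel G.Adj] (z : V) (c c' : V → ℕ) : Prop :=
  Relation.ReflTransGen (TopStep G z) c c' ∧ Stable G z c'

/-- Add a single grain at `x`. -/
def addOne (x : V) (c : V → ℕ) : V → ℕ := fun v => if v = x then c v + 1 else c v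

/-- One step of the sandpile Markov chain: add a grain at some non-sink vertex and
stabilize. -/
def ReachStep (G : SimpleGraph V) [DecidableRel G.Adj] (z : V) (c c' : V → ℕ) : Prop :=
  ∃ x, x ≠ z ∧ StabilizesTo G z (addOne x c) c'

/-- A stable sandpile is recurrent if whenever `c'` is reachable from `c` in the Markov
chain, `c` is also reachable from `c'`. -/
def Recurrent (G : SimpleGraph V) [DecidableRel G.Adj] (z : V) (c : V → ℕ) : Prop :=
  Stable G z c ∧ ∀ c', Relation.ReflTransGen (ReachStep G z) c c' →
    Relation.ReflTransGen (ReachStep G z) c' c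

section Aux
variable (G : SimpleGraph V) [DecidableRel G.Adj] (z : V)

lemma toppleZ_mono (c : V → ℕ) (x v : V) (hv : v ≠ x) : c v ≤ toppleZ G z c x v := by
  simp only [toppleZ, if_neg hv]; omega

lemma toppleZ_comm (c : V → ℕ) {x y : V} (hxy : x ≠ y)
    (hx : G.degree x ≤ c x) (hy : G.degree y ≤ c y) :
    toppleZ G z (toppleZ G z c x) y = toppleZ G z (toppleZ G z c y) x := by
  funext v
  by_cases hvx : v = x <;> by_cases hvy : v = y
  · exact absurd (hvx ▸ hvy) hxy
  · subst hvx
    simp only [toppleZ, if_pos rfl, if_neg hvy, if_neg (Ne.symm hxy), G.irrefl, false_and, if_true,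
      if_false, add_zero]
    omega
  · subst hvy
    simp only [toppleZ, if_pos rfl, if_neg hvx, if_neg hxy, G.irrefl, false_and, if_true,
      if_false, add_zero]
    omega
  · simp only [toppleZ, if_neg hvx, if_neg hvy]
    omega

lemma topStep_toppleZ {c : V → ℕ} {x : V} {G : SimpleGraph V} [DecidableRel G.Adj] {z : V}
    (hx : x ≠ z) (h : G.degree x ≤ c x) :
    TopStep G z c (toppleZ G z c x) := ⟨x, hx, h, rfl⟩

inductive Steps (G : SimpleGraph V) [DecidableRel G.Adj] (z : V) :
    ℕ → (V → ℕ) → (V → ℕ) → Prop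
  | refl (c) : Steps G z 0 c c
  | head {c d e : V → ℕ} {n : ℕ} : TopStep G z c d → Steps G z n d e → Steps G z (n + 1) c e

section Aux2
variable (G : SimpleGraph V) [DecidableRel G.Adj] (z : V)

lemma steps_of_rtg {c c' : V → ℕ} (h : Relation.ReflTransGen (TopStep G z) c c') :
    ∃ n, Steps G z n c c' := by
  induction h with
  | refl => exact ⟨0, Steps.refl c⟩
  | tail _ hstep ih =>
    obtain ⟨n, hn⟩ := ih
    refine ⟨n + 1, ?_⟩
    clear * - hn hstep
    induction hn with
    | refl c => exact Steps.head hstep (Steps.refl _)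
    | head h _ ih => exact Steps.head h (ih hstep)

lemma rtg_of_steps {n : ℕ} {c c' : V → ℕ} (h : Steps G z n c c') :
    Relation.ReflTransGen (TopStep G z) c c' := by
  induction h with
  | refl c => exact .refl
  | head h _ ih => exact .head h ih

lemma steps_topple_first : ∀ n, ∀ {c a : V → ℕ}, Steps G z n c a → Stable G z a →
    ∀ {x : V}, x ≠ z → G.degree x ≤ c x →
    ∃ m, m + 1 = n ∧ Steps G z m (toppleZ G z c x) a := by
  intro n
  induction n using Nat.strong_induction_on with
  | _ n ih =>
    intro c a hsteps hstab x hxz hxc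
    cases hsteps with
    | refl => exact absurd (hstab x hxz) (by omega)
    | @head c d e m hstep hrest =>
      obtain ⟨y, hyz, hyc, rfl⟩ := hstep
      by_cases hxy : x = y
      · subst hxy; exact ⟨m, rfl, hrest⟩
      · have hxd : G.degree x ≤ toppleZ G z c y x :=
          le_trans hxc (toppleZ_mono G z c y x hxy)
        obtain ⟨k, hk, hks⟩ := ih m (by omega) hrest hstab hxz hxd
        refine ⟨k + 1, by omega, ?_⟩
        have hcomm := toppleZ_comm G z c (Ne.symm hxy) hyc hxc
        refine Steps.head (topStep_toppleZ hyz ?_) ?_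
        · exact le_trans hyc (toppleZ_mono G z c x y (Ne.symm hxy))
        · rw [← hcomm]; exact hks

lemma stable_no_steps {n : ℕ} {c a : V → ℕ} (h : Steps G z n c a) (hc : Stable G z c) :
    c = a := by
  cases h with
  | refl => rfl
  | head hstep _ =>
    obtain ⟨y, hyz, hyc, _⟩ := hstep
    exact absurd (hc y hyz) (by omega)

lemma stabilize_unique {c a b : V → ℕ}
    (ha : Relation.ReflTransGen (TopStep G z) c a) (hsa : Stable G z a)
    (hb : Relation.ReflTransGen (TopStep G z) c b) (hsb : Stable G z b) : a = b := by
  obtain ⟨n, hn⟩ := steps_of_rtg G z ha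
  clear ha
  induction hb using Relation.ReflTransGen.head_induction_on generalizing n with
  | refl => exact (stable_no_steps G z hn hsb).symm
  | head hstep hrest ih =>
    obtain ⟨x, hxz, hxc, rfl⟩ := hstep
    obtain ⟨m, _, hm⟩ := steps_topple_first G z n hn hsa hxz hxc
    exact ih m hm

end Aux2

section Aux3
variable (G : SimpleGraph V) [DecidableRel G.Adj] (z : V)

lemma addOne_toppleZ (y : V) {c : V → ℕ} {x : V} (hx : G.degree x ≤ c x) :
    addOne y (toppleZ G z c x) = toppleZ G z (addOne y c) x := by
  funext v
  by_cases hvy : v = y <;> by_cases hvx : v = x <;>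
    simp only [addOne, toppleZ, hvy, hvx, if_pos rfl, if_true, if_false, if_neg] <;>
    first
      | omega
      | (simp only [if_neg hvy, if_neg hvx]; try omega)
      | skip
  all_goals subst_vars
  all_goals simp_all [addOne, toppleZ]
  all_goals omega

lemma addOne_topStep {c d : V → ℕ} (y : V) (h : TopStep G z c d) :
    TopStep G z (addOne y c) (addOne y d) := by
  obtain ⟨x, hxz, hxc, rfl⟩ := h
  refine ⟨x, hxz, ?_, addOne_toppleZ G z y hxc⟩
  simp only [addOne]
  split <;> omega

lemma addOne_rtg {c d : V → ℕ} (y : V)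
    (h : Relation.ReflTransGen (TopStep G z) c d) :
    Relation.ReflTransGen (TopStep G z) (addOne y c) (addOne y d) := by
  induction h with
  | refl => exact .refl
  | tail _ hstep ih => exact .tail ih (addOne_topStep G z y hstep)

end Aux3


lemma addOne_comm' (x y : V) (s : V → ℕ) : addOne y (addOne x s) = addOne x (addOne y s) := by
  funext v; simp only [addOne]; split_ifs <;> rfl


/-- Dhar's relations: on a finite connected graph with sink `z`, the operations `a_x`
(add one grain at `x`, then stabilize) on recurrent sandpiles commute, and
`a_x^{deg(x)} = Π_{u ∼ x, u ≠ z} a_u` (stated via one-shot additions, which agree with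
iterated additions by the abelian property). -/
theorem sandpile_addition_relations (G : SimpleGraph V) [DecidableRel G.Adj]
    (hconn : G.Connected) (z : V) :
    (∀ x y, x ≠ z → y ≠ z → ∀ s t₁ t₂ u₁ u₂ : V → ℕ, Recurrent G z s →
      StabilizesTo G z (addOne x s) t₁ → StabilizesTo G z (addOne y t₁) t₂ →
      StabilizesTo G z (addOne y s) u₁ → StabilizesTo G z (addOne x u₁) u₂ →
      t₂ = u₂) ∧
    (∀ x, x ≠ z → ∀ s t t' : V → ℕ, Recurrent G z s →
      StabilizesTo G z (fun v => s v + if v = x then G.degree x else 0) t →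
      StabilizesTo G z (fun v => s v + if G.Adj x v ∧ v ≠ z then 1 else 0) t' →
      t = t') := by
  constructor
  · rintro x y hx hy s t₁ t₂ u₁ u₂ - ⟨h1, _⟩ ⟨h2, hs2⟩ ⟨h3, _⟩ ⟨h4, hs4⟩
    have ha : Relation.ReflTransGen (TopStep G z) (addOne y (addOne x s)) t₂ :=
      ((addOne_rtg G z y h1).trans h2)
    have hb : Relation.ReflTransGen (TopStep G z) (addOne y (addOne x s)) u₂ := by
      rw [addOne_comm']
      exact (addOne_rtg G z x h3).trans h4
    exact stabilize_unique G z ha hs2 hb hs4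
  · rintro x hx s t t' - ⟨h1, hs1⟩ ⟨h2, hs2⟩
    set c₁ : V → ℕ := fun v => s v + if v = x then G.degree x else 0 with hc₁
    have hstep : TopStep G z c₁ (fun v => s v + if G.Adj x v ∧ v ≠ z then 1 else 0) := by
      refine ⟨x, hx, by simp [hc₁], ?_⟩
      funext v
      by_cases hvx : v = x <;> simp only [toppleZ, hc₁, hvx, if_true, if_false] <;> omega
    have hb : Relation.ReflTransGen (TopStep G z) c₁ t' := .head hstep h2
    exact stabilize_unique G z h1 hs1 hb hs2
end Aux
end
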